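/- Let c ∈ R and let w be a C^2 function on R^2_+ = {(x,y): x>0}, bounded below, continuous up to the boundary {x=0}, satisfying Δw + c w_y ≤ 0 in R^2_+, w ≥ 0 on {x = 0}, and for every R > 0, liminf_{|y|→∞} w(x,y) ≥ 0 uniformly in x ∈ [0,R]. Then w ≥ 0 in R^2_+. -/

import Mathlib

/-!
Perturb `w` to `u = w + η log (x + 1)`. The logarithm has second derivative `-η / (x + 1)² < 0`,
so `u` is a strict supersolution of `Δu + c u_y ≤ 0` and cannot attain an interior minimum on a
rectangle `[0, R] × [-S, S]`. On the boundary, `u ≥ -ε`: on `x = 0` by hypothesis, on `x = R`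
because `η log (R + 1)` beats the lower bound of `w` for large `R`, and on `y = ±S` by the uniform
`liminf` for large `S`. Hence `w(x, y) ≥ -ε - η log (x + 1)`, and `ε, η → 0` gives `w ≥ 0`.
-/

open MeasureTheory Real Set Filter Topology
open Function (uncurry)

/-- If `f'' < 0`, the second derivative test makes `a` also a local maximum, so `f` is locally
constant and `f'' = 0`. -/
theorem IsLocalMin.deriv_deriv_nonneg {f : ℝ → ℝ} {a : ℝ} (h : IsLocalMin f a)
    (hf : ContinuousAt f a) : 0 ≤ deriv (deriv f) a := by
  by_contra! hneg
  have hconst : f =ᶠ[𝓝 a] fun _ => f a :=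
    (h.and (isLocalMax_of_deriv_deriv_neg hneg h.deriv_eq_zero hf)).mono
      fun x hx => le_antisymm hx.2 hx.1
  simp [hconst.deriv.deriv_eq] at hneg

/-- `Δu + c ∂ᵧu` at `(x, y)`, through the one-variable slices of `u`. -/
noncomputable def driftLaplacian (c : ℝ) (u : ℝ → ℝ → ℝ) (x y : ℝ) : ℝ :=
  deriv (fun x' => deriv (fun x'' => u x'' y) x') x + deriv (deriv (u x)) y + c * deriv (u x) y

theorem IsLocalMin.driftLaplacian_nonneg {u : ℝ → ℝ → ℝ} {p : ℝ × ℝ}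
    (h : IsLocalMin (uncurry u) p) (hu : ContinuousAt (uncurry u) p) (c : ℝ) :
    0 ≤ driftLaplacian c u p.1 p.2 := by
  have hx : IsLocalMin (fun x => u x p.2) p.1 :=
    h.comp_continuous (g := fun x => (x, p.2)) (by fun_prop)
  have hy : IsLocalMin (u p.1) p.2 := h.comp_continuous (g := fun y => (p.1, y)) (by fun_prop)
  have hxc : ContinuousAt (fun x => u x p.2) p.1 :=
    hu.comp (f := fun x => (x, p.2)) (by fun_prop)
  have hyc : ContinuousAt (u p.1) p.2 := hu.comp (f := fun y => (p.1, y)) (by fun_prop)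
  rw [driftLaplacian, hy.deriv_eq_zero, mul_zero, add_zero]
  exact add_nonneg (hx.deriv_deriv_nonneg hxc) (hy.deriv_deriv_nonneg hyc)

theorem le_of_forall_mem_frontier_le_of_driftLaplacian_neg {c m : ℝ} {u : ℝ → ℝ → ℝ}
    {K : Set (ℝ × ℝ)} (hK : IsCompact K) (hu : ContinuousOn (uncurry u) K)
    (hL : ∀ p ∈ interior K, driftLaplacian c u p.1 p.2 < 0)
    (hm : ∀ p ∈ frontier K, m ≤ u p.1 p.2) {q : ℝ × ℝ} (hq : q ∈ K) : m ≤ u q.1 q.2 := by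
  obtain ⟨p, hpK, hmin⟩ := hK.exists_isMinOn ⟨q, hq⟩ hu
  have hp : p ∉ interior K := fun hp => by
    have hK' : K ∈ 𝓝 p := mem_interior_iff_mem_nhds.mp hp
    exact ((hmin.isLocalMin hK').driftLaplacian_nonneg (hu.continuousAt hK') c).not_gt (hL p hp)
  exact (hm p ⟨subset_closure hpK, hp⟩).trans (hmin hq)

theorem driftLaplacian_add_comp_fst {c x y : ℝ} {u : ℝ → ℝ → ℝ} {g : ℝ → ℝ}
    (hu : ContDiffAt ℝ 2 (fun x' => u x' y) x) (hg : ContDiffAt ℝ 2 g x) :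
    driftLaplacian c (fun x' y' => u x' y' + g x') x y =
      driftLaplacian c u x y + deriv (deriv g) x := by
  have hxx : deriv (deriv fun x' => u x' y + g x') x =
      deriv (deriv fun x' => u x' y) x + deriv (deriv g) x := by
    have h := iteratedDeriv_fun_add (n := 2) hu hg
    simp only [iteratedDeriv_eq_iterate] at h
    exact h
  have hy : deriv (fun y' => u x y' + g x) = deriv (u x) := funext fun _ => deriv_add_const _
  rw [driftLaplacian, driftLaplacian, hxx, hy]
  ring

theorem deriv_deriv_mul_log_add_one (η x : ℝ) :
    deriv (deriv fun x => η * log (x + 1)) x = -(η / (x + 1) ^ 2) := by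
  simp [deriv_comp_add_const, deriv_log', div_eq_mul_inv]

theorem le_add_mul_log_of_forall_mem_frontier {c m η : ℝ} {w : ℝ → ℝ → ℝ}
    {K : Set (ℝ × ℝ)} (hK : IsCompact K) (hK₁ : ∀ p ∈ K, -1 < p.1)
    (hw2 : ContDiffOn ℝ 2 (uncurry w) (interior K)) (hwc : ContinuousOn (uncurry w) K)
    (hsub : ∀ p ∈ interior K, driftLaplacian c w p.1 p.2 ≤ 0) (hη : 0 < η)
    (hm : ∀ p ∈ frontier K, m ≤ w p.1 p.2 + η * log (p.1 + 1)) {q : ℝ × ℝ} (hq : q ∈ K) :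
    m ≤ w q.1 q.2 + η * log (q.1 + 1) := by
  refine le_of_forall_mem_frontier_le_of_driftLaplacian_neg (c := c)
    (u := fun x y => w x y + η * log (x + 1)) hK ?_ ?_ hm hq
  · refine hwc.add (continuousOn_const.mul (ContinuousOn.log (by fun_prop) fun p hp => ?_))
    linarith [hK₁ p hp]
  · intro p hp
    have hp₁ : p.1 + 1 ≠ 0 := by linarith [hK₁ p (interior_subset hp)]
    have hslice : ContDiffAt ℝ 2 (fun x => w x p.2) p.1 :=
      (hw2.contDiffAt (isOpen_interior.mem_nhds hp)).comp p.1
        (contDiffAt_id.prodMk contDiffAt_const)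
    have hlog : ContDiffAt ℝ 2 (fun x => η * log (x + 1)) p.1 :=
      contDiffAt_const.mul ((contDiffAt_id.add contDiffAt_const).log hp₁)
    rw [driftLaplacian_add_comp_fst hslice hlog, deriv_deriv_mul_log_add_one]
    have : 0 < η / (p.1 + 1) ^ 2 := by positivity
    linarith [hsub p hp]

theorem neg_le_add_mul_log_of_rectangle {c ε η R S : ℝ} {w : ℝ → ℝ → ℝ} (hη : 0 < η)
    (hw2 : ContDiffOn ℝ 2 (uncurry w) (Ioo 0 R ×ˢ Ioo (-S) S))
    (hwc : ContinuousOn (uncurry w) (Icc 0 R ×ˢ Icc (-S) S))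
    (hsub : ∀ x ∈ Ioo 0 R, ∀ y ∈ Ioo (-S) S, driftLaplacian c w x y ≤ 0)
    (hleft : ∀ y ∈ Icc (-S) S, -ε ≤ w 0 y)
    (hright : ∀ y ∈ Icc (-S) S, -ε - η * log (R + 1) ≤ w R y)
    (hends : ∀ x ∈ Icc 0 R, -ε ≤ w x (-S) ∧ -ε ≤ w x S)
    {x y : ℝ} (hx : x ∈ Icc 0 R) (hy : y ∈ Icc (-S) S) : -ε ≤ w x y + η * log (x + 1) := by
  have hint : interior (Icc 0 R ×ˢ Icc (-S) S) = Ioo 0 R ×ˢ Ioo (-S) S := by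
    rw [interior_prod_eq, interior_Icc, interior_Icc]
  refine le_add_mul_log_of_forall_mem_frontier (c := c) (isCompact_Icc.prod isCompact_Icc)
    (fun p hp => by linarith [hp.1.1]) (hint ▸ hw2) hwc ?_ hη ?_ (mk_mem_prod hx hy)
  · rw [hint]
    exact fun p hp => hsub _ hp.1 _ hp.2
  rw [frontier_prod_eq, closure_Icc, closure_Icc, frontier_Icc (hx.1.trans hx.2),
    frontier_Icc (hy.1.trans hy.2)]
  rintro ⟨x', y'⟩ (⟨hx', rfl | rfl⟩ | ⟨rfl | rfl, hy'⟩)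
  · have := mul_nonneg hη.le (log_nonneg (by linarith [hx'.1] : (1 : ℝ) ≤ x' + 1))
    linarith [(hends x' hx').1]
  · have := mul_nonneg hη.le (log_nonneg (by linarith [hx'.1] : (1 : ℝ) ≤ x' + 1))
    linarith [(hends x' hx').2]
  · simpa using hleft y' hy'
  · linarith [hright y' hy']

/-- Phragmén–Lindelöf-type maximum principle on the half-plane: if
`Δw + c w_y ≤ 0` in `ℝ²₊`, `w` is bounded below, continuous up to the boundary,
nonnegative on `{x = 0}`, and `liminf_{|y|→∞} w ≥ 0` uniformly on `x`-compact sets,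
then `w ≥ 0` in `ℝ²₊`. -/
theorem maximum_principle_halfplane (c : ℝ) (w : ℝ → ℝ → ℝ)
    (hw2 : ContDiffOn ℝ 2 (fun p : ℝ × ℝ => w p.1 p.2) {p : ℝ × ℝ | 0 < p.1})
    (hwc : ContinuousOn (fun p : ℝ × ℝ => w p.1 p.2) {p : ℝ × ℝ | 0 ≤ p.1})
    (hbdd : ∃ b : ℝ, ∀ x ≥ (0 : ℝ), ∀ y : ℝ, b ≤ w x y)
    (hsub : ∀ x > (0 : ℝ), ∀ y : ℝ,
      deriv (fun x' => deriv (fun x'' => w x'' y) x') x + deriv (deriv (w x)) y +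
        c * deriv (w x) y ≤ 0)
    (hbdry : ∀ y : ℝ, 0 ≤ w 0 y)
    (hliminf : ∀ R > (0 : ℝ), ∀ ε > (0 : ℝ), ∃ M : ℝ,
      ∀ x ∈ Icc (0 : ℝ) R, ∀ y : ℝ, M ≤ |y| → -ε ≤ w x y) :
    ∀ x > (0 : ℝ), ∀ y : ℝ, 0 ≤ w x y := by
  obtain ⟨b, hb⟩ := hbdd
  intro x hx y
  have hlower : ∀ η > 0, -η ≤ w x y + η * log (x + 1) := by
    intro η hη
    set R := x + exp (|b| / η)
    have hbR : |b| ≤ η * log (R + 1) := by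
      rw [← div_le_iff₀' hη, le_log_iff_exp_le (by positivity)]
      linarith
    obtain ⟨M, hM⟩ := hliminf R (by positivity) η hη
    set S := |y| + |M|
    have hMS : M ≤ |S| :=
      (le_abs_self M).trans ((le_add_of_nonneg_left (abs_nonneg y)).trans (le_abs_self S))
    refine neg_le_add_mul_log_of_rectangle hη (hw2.mono fun p hp => hp.1.1)
      (hwc.mono fun p hp => hp.1.1) (fun x' hx' y' _ => hsub x' hx'.1 y')
      (fun y' _ => by linarith [hbdry y']) (fun y' _ => ?_)
      (fun x' hx' => ⟨hM x' hx' _ (by rwa [abs_neg]), hM x' hx' _ hMS⟩) ⟨hx.le, ?_⟩ ⟨?_, ?_⟩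
    · linarith [hb R (by positivity) y', neg_abs_le b]
    · linarith [exp_pos (|b| / η)]
    · linarith [neg_abs_le y, abs_nonneg M]
    · linarith [le_abs_self y, abs_nonneg M]
  refine le_of_forall_pos_le_add fun δ hδ => ?_
  have hL : 0 < log (x + 1) + 1 := by linarith [log_nonneg (by linarith : (1 : ℝ) ≤ x + 1)]
  have hδ' : δ / (log (x + 1) + 1) * (log (x + 1) + 1) = δ := div_mul_cancel₀ _ hL.ne'
  linarith [hlower (δ / (log (x + 1) + 1)) (by positivity)]
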